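/- arXiv:2410.01277 — 7 statements merged into one kernel-verified Lean document; each statement's English description precedes it below -/
import Mathlib

section
/- Let α : ℝ × ℝ → ℝ be continuous, locally Lipschitz in its second argument, and such that for each fixed t the map x ↦ α(t, x) is strictly increasing with α(t, 0) = 0. If x : ℝ → ℝ is differentiable and satisfies x'(t) = −α(t, x(t)) for all t ≥ 0, and x(0) ≥ 0, then x(t) ≥ 0 for all t ≥ 0. -/
open Set

/- If `f b < 0`, let `s` be the last time in `[a, b]` with `0 ≤ f s`: on `(s, b)` the function is
negative, hence strictly increasing, forcing `f b > f s ≥ 0`. -/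
theorem nonneg_of_deriv_pos_of_neg {f : ℝ → ℝ} {a : ℝ} (hf : ContinuousOn f (Ici a))
    (ha : 0 ≤ f a) (hpos : ∀ t ∈ Ioi a, f t < 0 → 0 < deriv f t) :
    ∀ t ∈ Ici a, 0 ≤ f t := by
  intro b hb
  by_contra! hfb
  set S := Icc a b ∩ f ⁻¹' Ici 0
  have hS : IsCompact S := isCompact_Icc.of_isClosed_subset
    ((hf.mono Icc_subset_Ici_self).preimage_isClosed_of_isClosed isClosed_Icc isClosed_Ici)
    inter_subset_left
  obtain ⟨s, ⟨⟨has, hsb⟩, hfs : 0 ≤ f s⟩, hs_max⟩ :=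
    hS.exists_isGreatest ⟨a, left_mem_Icc.2 hb, ha⟩
  have hsb' : s < b := hsb.lt_of_ne (by rintro rfl; linarith)
  have hneg : ∀ t ∈ Ioo s b, f t < 0 := fun t ⟨hst, htb⟩ => by
    by_contra! ht
    exact (hs_max ⟨⟨has.trans hst.le, htb.le⟩, ht⟩).not_gt hst
  have hmono : StrictMonoOn f (Icc s b) := by
    refine strictMonoOn_of_deriv_pos (convex_Icc s b) (hf.mono fun t ht => has.trans ht.1)
      fun t ht => ?_
    rw [interior_Icc] at ht
    exact hpos t (has.trans_lt ht.1) (hneg t ht)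
  linarith [hmono (left_mem_Icc.2 hsb) (right_mem_Icc.2 hsb) hsb']

theorem stmt_0_general (α : ℝ × ℝ → ℝ)
    (hmono : ∀ t : ℝ, StrictMono (fun x : ℝ => α (t, x)))
    (hzero : ∀ t : ℝ, α (t, 0) = 0)
    (x : ℝ → ℝ) (hx : Differentiable ℝ x)
    (hode : ∀ t : ℝ, 0 ≤ t → deriv x t = -α (t, x t))
    (hx0 : 0 ≤ x 0) :
    ∀ t : ℝ, 0 ≤ t → 0 ≤ x t := by
  refine fun t ht => nonneg_of_deriv_pos_of_neg hx.continuous.continuousOn hx0 ?_ t ht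
  intro s hs hxs
  have hα : α (s, x s) < 0 := hzero s ▸ hmono s hxs
  rw [hode s hs.le]
  linarith

/-- Sign preservation for the scalar ODE `x' = -α(t, x)` where `α(t, ·)` is a
class K function for every `t` (Proposition 1 of the paper). -/
theorem stmt_0 (α : ℝ × ℝ → ℝ)
    (hcont : Continuous α)
    (hlip : ∀ t : ℝ, LocallyLipschitz (fun x : ℝ => α (t, x)))
    (hmono : ∀ t : ℝ, StrictMono (fun x : ℝ => α (t, x)))
    (hzero : ∀ t : ℝ, α (t, 0) = 0)
    (x : ℝ → ℝ) (hx : Differentiable ℝ x)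
    (hode : ∀ t : ℝ, 0 ≤ t → deriv x t = -α (t, x t))
    (hx0 : 0 ≤ x 0) :
    ∀ t : ℝ, 0 ≤ t → 0 ≤ x t :=
  stmt_0_general α hmono hzero x hx hode hx0
end

section
/- Let α : ℝ × ℝ → ℝ be continuous, locally Lipschitz in its second argument, and such that for each fixed t the map x ↦ α(t, x) is strictly increasing with α(t, 0) = 0. If x : ℝ → ℝ is differentiable and satisfies x'(t) = −α(t, x(t)) for all t ≥ 0, then the function t ↦ (x(t))² is nonincreasing (antitone) on [0, ∞). -/
/-- Lyapunov-decrease part of Proposition 1 of the paper: along solutions of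
`x' = -α(t, x)` with `α(t, ·)` a class K function for every `t`, the squared
state `t ↦ x(t)²` is nonincreasing on `[0, ∞)`. -/
theorem stmt_1 (α : ℝ × ℝ → ℝ)
    (hcont : Continuous α)
    (hlip : ∀ t : ℝ, LocallyLipschitz (fun x : ℝ => α (t, x)))
    (hmono : ∀ t : ℝ, StrictMono (fun x : ℝ => α (t, x)))
    (hzero : ∀ t : ℝ, α (t, 0) = 0)
    (x : ℝ → ℝ) (hx : Differentiable ℝ x)
    (hode : ∀ t : ℝ, 0 ≤ t → deriv x t = -α (t, x t)) :
    AntitoneOn (fun t : ℝ => (x t) ^ 2) (Set.Ici (0 : ℝ)) := by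
  apply antitoneOn_of_deriv_nonpos (convex_Ici 0)
  · exact ((hx.pow 2).continuous).continuousOn
  · exact ((hx.pow 2)).differentiableOn
  · intro t ht
    rw [interior_Ici] at ht
    have hd : deriv (fun s => x s ^ 2) t = 2 * x t * deriv x t := by
      rw [deriv_fun_pow (hx t) 2]
      ring
    rw [hd, hode t ht.le]
    rcases lt_trichotomy (x t) 0 with h | h | h
    · have : α (t, x t) < 0 := by
        have := (hmono t) h
        simpa [hzero t] using this
      nlinarith
    · simp [h, hzero t]
    · have : 0 < α (t, x t) := by
        have := (hmono t) h
        simpa [hzero t] using this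
      nlinarith
end

section
/- Let e_c ∈ ℝ³ be a unit vector, ψ_F ∈ (0, π/2), q ∈ ℝ³ a feature point, and let γ : ℝ → ℝ be a locally Lipschitz class K function. Let p : ℝ → ℝ³ and R : ℝ → ℝ³ˣ³ be differentiable with p'(t) = v(t) and R'(t) = R(t)·ω̂(t) for continuous v, ω : ℝ → ℝ³, and suppose q ≠ p(t) for all t. Let d(t) = ‖q − p(t)‖, β(t) = (q − p(t))/d(t), and h(t) = ⟨β(t), R(t)e_c⟩ − cos ψ_F. Let constants γ₀, d_m, d_M satisfy γ₀ > 0 and 0 < d_m < 1 < d_M, and let d̂, c₁, c₂ : ℝ → ℝ be continuous functions such that for every t ≥ 0: (i) d(t)/d̂(t) ∈ [d_m, d_M]; (ii) c₁(t) + c₂(t) = γ₀; (iii) γ₀/(1 − d_M) < c₂(t) < γ₀/(1 − d_m); (iv) −(1/d̂(t))·⟨(I − β(t)β(t)ᵀ) R(t)e_c, v(t)⟩ + c₁(t)·γ(h(t)) ≥ 0; and (v) ⟨β(t), R(t)(ω(t) × e_c)⟩ + c₂(t)·γ(h(t)) ≥ 0. If h(0) ≥ 0, then h(t) ≥ 0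 for all t ≥ 0. -/
open scoped RealInnerProductSpace

attribute [local instance] Matrix.normedAddCommGroup Matrix.normedSpace

/-- The hat map, sending `ω ∈ ℝ³` to the skew-symmetric matrix `ω̂` satisfying
`ω̂ x = ω × x` for all `x ∈ ℝ³`. -/
noncomputable def hatMap (ω : EuclideanSpace ℝ (Fin 3)) : Matrix (Fin 3) (Fin 3) ℝ :=
  !![0, -ω 2, ω 1; ω 2, 0, -ω 0; -ω 1, ω 0, 0]

/-- Multiplication of a matrix with a vector of `EuclideanSpace ℝ (Fin 3)`. -/
noncomputable def mulE (M : Matrix (Fin 3) (Fin 3) ℝ) (x : EuclideanSpace ℝ (Fin 3)) :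
    EuclideanSpace ℝ (Fin 3) :=
  (WithLp.equiv 2 (Fin 3 → ℝ)).symm (M.mulVec ((WithLp.equiv 2 (Fin 3 → ℝ)) x))

/-- The cross product on `ℝ³`. -/
noncomputable def crossE (ω x : EuclideanSpace ℝ (Fin 3)) : EuclideanSpace ℝ (Fin 3) :=
  (WithLp.equiv 2 (Fin 3 → ℝ)).symm
    (crossProduct ((WithLp.equiv 2 (Fin 3 → ℝ)) ω) ((WithLp.equiv 2 (Fin 3 → ℝ)) x))

lemma mulE_mul (A B : Matrix (Fin 3) (Fin 3) ℝ) (x : EuclideanSpace ℝ (Fin 3)) :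
    mulE (A * B) x = mulE A (mulE B x) := by
  simp [mulE, Matrix.mulVec_mulVec]

lemma mulE_hatMap (ω x : EuclideanSpace ℝ (Fin 3)) :
    mulE (hatMap ω) x = crossE ω x := by
  ext i
  fin_cases i <;>
    simp [mulE, crossE, hatMap, Matrix.mulVec, crossProduct, Fin.sum_univ_three,
      dotProduct] <;> ring

lemma HasDerivAt.mulE' {R : ℝ → Matrix (Fin 3) (Fin 3) ℝ} {R' : Matrix (Fin 3) (Fin 3) ℝ}
    {t : ℝ} (hR : HasDerivAt R R' t) (e : EuclideanSpace ℝ (Fin 3)) :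
    HasDerivAt (fun s => mulE (R s) e) (mulE R' e) t := by
  let L : Matrix (Fin 3) (Fin 3) ℝ →ₗ[ℝ] EuclideanSpace ℝ (Fin 3) :=
    { toFun := fun M => mulE M e
      map_add' := by intro M N; ext i; simp [mulE, Matrix.add_mulVec]
      map_smul' := by intro c M; ext i; simp [mulE, Matrix.smul_mulVec] }
  exact (L.toContinuousLinearMap.hasFDerivAt.comp_hasDerivAt t hR)

/-- Theorem 2 of the paper (velocity control case): splitting the CBF
constraint for `h = βᵀ R e_c - cos ψ_F` into a translational constraint (using
the estimated distance `d̂`) and a rotational constraint, with the splitting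
coefficients `c₁, c₂` satisfying `c₁ + c₂ = γ₀` and
`γ₀/(1 - d_M) < c₂ < γ₀/(1 - d_m)`, renders the field-of-view safe set
`{h ≥ 0}` forward invariant whenever the relative distance-estimation error
`d̃ = d/d̂` stays in `[d_m, d_M]`. -/
theorem stmt_4
    (e_c : EuclideanSpace ℝ (Fin 3)) (he_c : ‖e_c‖ = 1)
    (ψF : ℝ) (hψF : ψF ∈ Set.Ioo 0 (Real.pi / 2))
    (q : EuclideanSpace ℝ (Fin 3))
    (γ : ℝ → ℝ) (hγmono : StrictMono γ) (hγ0 : γ 0 = 0) (hγlip : LocallyLipschitz γ)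
    (p : ℝ → EuclideanSpace ℝ (Fin 3)) (R : ℝ → Matrix (Fin 3) (Fin 3) ℝ)
    (v ω : ℝ → EuclideanSpace ℝ (Fin 3)) (hv : Continuous v) (hω : Continuous ω)
    (hp : ∀ t : ℝ, HasDerivAt p (v t) t)
    (hR : ∀ t : ℝ, HasDerivAt R (R t * hatMap (ω t)) t)
    (hq : ∀ t : ℝ, q ≠ p t)
    (d : ℝ → ℝ) (hd : ∀ t, d t = ‖q - p t‖)
    (β : ℝ → EuclideanSpace ℝ (Fin 3)) (hβ : ∀ t, β t = (d t)⁻¹ • (q - p t))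
    (h : ℝ → ℝ) (hh : ∀ t, h t = ⟪β t, mulE (R t) e_c⟫ - Real.cos ψF)
    (γ₀ dm dM : ℝ) (hγ₀ : 0 < γ₀) (hdm : 0 < dm) (hdm1 : dm < 1) (hdM : 1 < dM)
    (dhat c₁ c₂ : ℝ → ℝ)
    (hdhat : Continuous dhat) (hc₁ : Continuous c₁) (hc₂ : Continuous c₂)
    (h_i : ∀ t : ℝ, 0 ≤ t → d t / dhat t ∈ Set.Icc dm dM)
    (h_ii : ∀ t : ℝ, 0 ≤ t → c₁ t + c₂ t = γ₀)
    (h_iii : ∀ t : ℝ, 0 ≤ t → γ₀ / (1 - dM) < c₂ t ∧ c₂ t < γ₀ / (1 - dm))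
    (h_iv : ∀ t : ℝ, 0 ≤ t →
      0 ≤ -(dhat t)⁻¹ * ⟪mulE (R t) e_c - ⟪β t, mulE (R t) e_c⟫ • β t, v t⟫
        + c₁ t * γ (h t))
    (h_v : ∀ t : ℝ, 0 ≤ t →
      0 ≤ ⟪β t, mulE (R t) (crossE (ω t) e_c)⟫ + c₂ t * γ (h t))
    (h0 : 0 ≤ h 0) :
    ∀ t : ℝ, 0 ≤ t → 0 ≤ h t := by
  have hdpos : ∀ t, 0 < d t := by
    intro t; rw [hd]; exact norm_pos_iff.mpr (sub_ne_zero.mpr (hq t))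
  -- derivative of u = q - p
  have hu : ∀ t, HasDerivAt (fun s => q - p s) (-(v t)) t := fun t => (hp t).const_sub q
  -- derivative of d
  have hdd : ∀ t, HasDerivAt d (-⟪β t, v t⟫) t := by
    intro t
    have h1 : HasDerivAt (fun s => ‖q - p s‖ ^ 2) (2 * ⟪q - p t, -(v t)⟫) t := (hu t).norm_sq
    have hne : ‖q - p t‖ ^ 2 ≠ 0 := by
      have := hdpos t; rw [hd] at this; positivity
    have h2 := h1.sqrt hne
    have hfun : d = fun s => Real.sqrt (‖q - p s‖ ^ 2) := by
      funext s; rw [hd, Real.sqrt_sq (norm_nonneg _)]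
    rw [hfun]
    convert h2 using 1
    rw [Real.sqrt_sq (norm_nonneg _), hβ, real_inner_smul_left, inner_neg_right, hd]
    have hne' : ‖q - p t‖ ≠ 0 := by intro hh0; rw [← hd] at hh0; exact (hdpos t).ne' hh0
    field_simp
  -- derivative of β
  have hβd : ∀ t, HasDerivAt β
      ((d t)⁻¹ • (-(v t)) + (-(-⟪β t, v t⟫) / d t ^ 2) • (q - p t)) t := by
    intro t
    have hder := ((hdd t).inv (hdpos t).ne').smul (hu t)
    have hfe : (d⁻¹ • fun s => q - p s) = β := (funext hβ).symm
    rw [hfe] at hder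
    exact hder
  -- the key derivative formula for h
  have key : ∀ t, HasDerivAt h
      (-(d t)⁻¹ * ⟪mulE (R t) e_c - ⟪β t, mulE (R t) e_c⟫ • β t, v t⟫
        + ⟪β t, mulE (R t) (crossE (ω t) e_c)⟫) t := by
    intro t
    have hw : HasDerivAt (fun s => mulE (R s) e_c) (mulE (R t * hatMap (ω t)) e_c) t :=
      (hR t).mulE' e_c
    have hfun : h = fun s => ⟪β s, mulE (R s) e_c⟫ - Real.cos ψF := funext hh
    rw [hfun]
    have h3 := ((hβd t).inner ℝ hw).sub_const (Real.cos ψF)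
    convert h3 using 1
    case e'_4 => rfl
    case e'_5 => rfl
    rw [mulE_mul, mulE_hatMap]
    have hβt : β t = (d t)⁻¹ • (q - p t) := hβ t
    rw [hβt]
    simp only [inner_sub_left, inner_add_left, real_inner_smul_left, real_inner_smul_right,
      inner_neg_left, inner_neg_right, inner_smul_left, RCLike.inner_apply, map_inv₀,
      conj_trivial]
    rw [real_inner_comm (mulE (R t) e_c) (v t)]
    have hd0 := (hdpos t).ne'
    field_simp
    ring
  have hcont : Continuous h :=
    continuous_iff_continuousAt.mpr fun t => (key t).differentiableAt.continuousAt
  -- positivity of the derivative when h < 0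
  have pos : ∀ t, 0 ≤ t → h t < 0 → 0 < deriv h t := by
    intro t ht hneg
    have hg : γ (h t) < 0 := by
      have := hγmono hneg; rwa [hγ0] at this
    obtain ⟨hr1, hr2⟩ := h_i t ht
    have hdhatpos : 0 < dhat t := by
      by_contra hle
      push_neg at hle
      rcases eq_or_lt_of_le hle with heq | hlt
      · rw [heq] at hr1
        simp at hr1
        linarith
      · have : d t / dhat t < 0 := div_neg_of_pos_of_neg (hdpos t) hlt
        linarith
    set X := ⟪mulE (R t) e_c - ⟪β t, mulE (R t) e_c⟫ • β t, v t⟫ with hX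
    set Y := ⟪β t, mulE (R t) (crossE (ω t) e_c)⟫ with hY
    set g := γ (h t) with hgdef
    have e1 : (dhat t)⁻¹ * X ≤ c₁ t * g := by
      have := h_iv t ht; linarith
    have e2 : -(c₂ t * g) ≤ Y := by
      have := h_v t ht; linarith
    have e3 : (d t)⁻¹ * X ≤ (dhat t / d t) * (c₁ t * g) := by
      have hq1 : 0 < dhat t / d t := div_pos hdhatpos (hdpos t)
      have := mul_le_mul_of_nonneg_left e1 hq1.le
      have hstep : (dhat t / d t) * ((dhat t)⁻¹ * X) = (d t)⁻¹ * X := by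
        rw [div_mul_eq_mul_div, ← mul_assoc, mul_inv_cancel₀ hdhatpos.ne', one_mul,
          div_eq_inv_mul]
      rw [← hstep]
      exact this
    -- coefficient positivity
    have hK : 0 < (dhat t / d t) * c₁ t + c₂ t := by
      set r := d t / dhat t with hrdef
      have hrpos : 0 < r := lt_of_lt_of_le hdm hr1
      have hc1 : c₁ t = γ₀ - c₂ t := by have := h_ii t ht; linarith
      obtain ⟨hiii1, hiii2⟩ := h_iii t ht
      have hb1 : c₂ t * (1 - dM) < γ₀ := by
        rw [div_lt_iff_of_neg (by linarith : 1 - dM < 0)] at hiii1; linarith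
      have hb2 : c₂ t * (1 - dm) < γ₀ := by
        rw [lt_div_iff₀ (by linarith : (0:ℝ) < 1 - dm)] at hiii2; linarith
      have hP : 0 < γ₀ + c₂ t * (r - 1) := by
        rcases le_or_gt 0 (c₂ t) with hc | hc
        · nlinarith
        · nlinarith
      have hinv : dhat t / d t = r⁻¹ := by
        rw [hrdef]; field_simp
      rw [hinv, hc1]
      have : (r⁻¹ * (γ₀ - c₂ t) + c₂ t) = (γ₀ + c₂ t * (r - 1)) / r := by
        field_simp; ring
      rw [this]
      exact div_pos hP hrpos
    have hderiv : deriv h t = -(d t)⁻¹ * X + Y := (key t).deriv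
    rw [hderiv]
    nlinarith [mul_pos (neg_pos.mpr hg) hK, e2, e3]
  -- forward invariance
  intro t₁ ht₁
  by_contra hneg
  push_neg at hneg
  set S := Set.Icc (0:ℝ) t₁ ∩ {s | 0 ≤ h s} with hSdef
  have hS0 : (0:ℝ) ∈ S := ⟨⟨le_refl _, ht₁⟩, h0⟩
  have hSbdd : BddAbove S := ⟨t₁, fun s hs => hs.1.2⟩
  have hSclosed : IsClosed S := isClosed_Icc.inter (isClosed_le continuous_const hcont)
  set t₀ := sSup S with ht₀def
  have ht₀S : t₀ ∈ S := hSclosed.csSup_mem ⟨0, hS0⟩ hSbdd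
  have ht₀le : t₀ ≤ t₁ := csSup_le ⟨0, hS0⟩ fun s hs => hs.1.2
  have ht₀lt : t₀ < t₁ := by
    rcases lt_or_eq_of_le ht₀le with hlt | heq
    · exact hlt
    · exfalso; rw [heq] at ht₀S; exact absurd ht₀S.2 (not_le.mpr hneg)
  have hmono : StrictMonoOn h (Set.Icc t₀ t₁) := by
    apply strictMonoOn_of_deriv_pos (convex_Icc _ _) hcont.continuousOn
    intro s hs
    rw [interior_Icc] at hs
    have hs0 : 0 ≤ s := le_trans ht₀S.1.1 hs.1.le
    have hsneg : h s < 0 := by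
      by_contra hge
      push_neg at hge
      have hsS : s ∈ S := ⟨⟨hs0, hs.2.le⟩, hge⟩
      exact absurd (le_csSup hSbdd hsS) (not_le.mpr hs.1)
    exact pos s hs0 hsneg
  have hlt := hmono ⟨le_refl _, ht₀le⟩ ⟨ht₀le, le_refl _⟩ ht₀lt
  have h0' : 0 ≤ h t₀ := ht₀S.2
  linarith
end

section
/- Let γ₀ > 0 and 0 < d_m < 1 < d_M. If c₂ ∈ ℝ satisfies γ₀/(1 − d_M) < c₂ < γ₀/(1 − d_m) and c₁ = γ₀ − c₂, then for every d̃ ∈ [d_m, d_M] one has c₂ + c₁/d̃ > 0. -/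
/-! Multiplying by `d̃ > 0`, the claim is `c₁ + c₂ d̃ > 0`. The left side is affine in `d̃`, so it
suffices to check the endpoints `d_m` and `d_M`, and there, after clearing the denominators
`1 - d_m > 0` and `1 - d_M < 0`, the two inequalities are exactly the bounds on `c₂`. -/

lemma add_mul_pos_of_mem_Icc {a b x α β : ℝ} (hx : x ∈ Set.Icc a b)
    (ha : 0 < α + β * a) (hb : 0 < α + β * b) : 0 < α + β * x := by
  obtain ⟨hax, hxb⟩ := hx
  rcases le_total 0 β with hβ | hβ
  · nlinarith [mul_le_mul_of_nonneg_left hax hβ]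
  · nlinarith [mul_le_mul_of_nonpos_left hxb hβ]

theorem stmt_5_general (γ₀ dm dM c₁ c₂ : ℝ)
    (hdm : 0 < dm) (hdm1 : dm < 1) (hdM : 1 < dM)
    (hlo : γ₀ / (1 - dM) < c₂) (hhi : c₂ < γ₀ / (1 - dm))
    (hc₁ : c₁ = γ₀ - c₂) :
    ∀ d ∈ Set.Icc dm dM, 0 < c₂ + c₁ / d := by
  intro d hd
  have hd₀ : 0 < d := hdm.trans_le hd.1
  have hm : 0 < c₁ + c₂ * dm := by
    have := (lt_div_iff₀ (sub_pos.2 hdm1)).1 hhi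
    linarith
  have hM : 0 < c₁ + c₂ * dM := by
    have := (div_lt_iff_of_neg (sub_neg.2 hdM)).1 hlo
    linarith
  calc 0 < (c₁ + c₂ * d) / d := div_pos (add_mul_pos_of_mem_Icc hd hm hM) hd₀
    _ = c₂ + c₁ / d := by field_simp; ring

/-- Core algebraic lemma in the proof of Theorem 2 of the paper: the constraints
`c₁ + c₂ = γ₀` and `γ₀/(1 - d_M) < c₂ < γ₀/(1 - d_m)` guarantee that the
effective coefficient `c₂ + c₁/d̃` is positive for every `d̃ ∈ [d_m, d_M]`. -/
theorem stmt_5 (γ₀ dm dM c₁ c₂ : ℝ)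
    (hγ₀ : 0 < γ₀) (hdm : 0 < dm) (hdm1 : dm < 1) (hdM : 1 < dM)
    (hlo : γ₀ / (1 - dM) < c₂) (hhi : c₂ < γ₀ / (1 - dm))
    (hc₁ : c₁ = γ₀ - c₂) :
    ∀ d ∈ Set.Icc dm dM, 0 < c₂ + c₁ / d :=
  stmt_5_general γ₀ dm dM c₁ c₂ hdm hdm1 hdM hlo hhi hc₁
end

section
/- Let γ₁, γ₂ : ℝ → ℝ be differentiable class K functions, let L ∈ ℝ, and let α₁, α₂ : ℝ → ℝ be differentiable with α₁(0) = 0 and α₂(0) = 0. Suppose that for all h, u ∈ ℝ: α₁'(h)·u + α₂(u + α₁(h)) = L·(γ₁'(h)·u + γ₂(u + γ₁(h))). Then α₁'(0) + α₂'(0) = L·(γ₁'(0) + γ₂'(0)) and α₁'(0)·α₂'(0) = L·γ₁'(0)·γ₂'(0); consequently α₁'(0) and α₂'(0) are the two roots of the quadratic equation s² − L·G·s + L·γ₁'(0)·γ₂'(0) = 0, where G = γ₁'(0) + γ₂'(0). -/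
/-!
Putting `h = 0` in the functional equation gives `α₁'(0) u + α₂ u = L (γ₁'(0) u + γ₂ u)` for all `u`,
and differentiating at `u = 0` yields the sum. Putting `u = 0` gives `α₂ ∘ α₁ = L • (γ₂ ∘ γ₁)`,
and the chain rule at `0` yields the product. Vieta's formulas then give the quadratic.
-/

section

variable {𝕜 : Type*} [NontriviallyNormedField 𝕜]

theorem add_deriv_eq_of_forall_mul_add_eq {f g : 𝕜 → 𝕜} {a b L x : 𝕜}
    (hf : DifferentiableAt 𝕜 f x) (hg : DifferentiableAt 𝕜 g x)
    (h : ∀ u, a * u + f u = L * (b * u + g u)) :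
    a + deriv f x = L * (b + deriv g x) := by
  have hl : HasDerivAt (fun u => a * u + f u) (a + deriv f x) x :=
    (((hasDerivAt_id' x).const_mul a).add hf.hasDerivAt).congr_deriv (by rw [mul_one])
  have hr : HasDerivAt (fun u => L * (b * u + g u)) (L * (b + deriv g x)) x :=
    ((((hasDerivAt_id' x).const_mul b).add hg.hasDerivAt).const_mul L).congr_deriv
      (by rw [mul_one])
  exact hl.unique (by simpa only [← h] using hr)

theorem deriv_mul_deriv_eq_of_forall_comp_eq {α₁ α₂ γ₁ γ₂ : 𝕜 → 𝕜} {L x : 𝕜}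
    (hα₁ : DifferentiableAt 𝕜 α₁ x) (hα₂ : DifferentiableAt 𝕜 α₂ (α₁ x))
    (hγ₁ : DifferentiableAt 𝕜 γ₁ x) (hγ₂ : DifferentiableAt 𝕜 γ₂ (γ₁ x))
    (h : ∀ t, α₂ (α₁ t) = L * γ₂ (γ₁ t)) :
    deriv α₂ (α₁ x) * deriv α₁ x = L * (deriv γ₂ (γ₁ x) * deriv γ₁ x) := by
  have hl := hα₂.hasDerivAt.comp x hα₁.hasDerivAt
  have hr := (hγ₂.hasDerivAt.comp x hγ₁.hasDerivAt).const_mul L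
  exact hl.unique (by simpa only [Function.comp_def, ← h] using hr)

end

theorem sq_sub_add_mul_add_mul_eq_zero_of_mem_pair {R : Type*} [CommRing R] {x y s : R}
    (hs : s ∈ ({x, y} : Set R)) : s ^ 2 - (x + y) * s + x * y = 0 := by
  rcases hs with rfl | rfl <;> ring

theorem stmt_8_general (γ₁ γ₂ α₁ α₂ : ℝ → ℝ) (L : ℝ)
    (hγ₁d : Differentiable ℝ γ₁) (hγ₁0 : γ₁ 0 = 0)
    (hγ₂d : Differentiable ℝ γ₂)
    (hα₁d : Differentiable ℝ α₁) (hα₂d : Differentiable ℝ α₂)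
    (hα₁0 : α₁ 0 = 0)
    (heq : ∀ h u : ℝ,
      deriv α₁ h * u + α₂ (u + α₁ h) = L * (deriv γ₁ h * u + γ₂ (u + γ₁ h))) :
    deriv α₁ 0 + deriv α₂ 0 = L * (deriv γ₁ 0 + deriv γ₂ 0) ∧
    deriv α₁ 0 * deriv α₂ 0 = L * (deriv γ₁ 0 * deriv γ₂ 0) ∧
    ∀ s ∈ ({deriv α₁ 0, deriv α₂ 0} : Set ℝ),
      s ^ 2 - L * (deriv γ₁ 0 + deriv γ₂ 0) * s
        + L * (deriv γ₁ 0) * (deriv γ₂ 0) = 0 := by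
  have hsum : deriv α₁ 0 + deriv α₂ 0 = L * (deriv γ₁ 0 + deriv γ₂ 0) :=
    add_deriv_eq_of_forall_mul_add_eq (hα₂d 0) (hγ₂d 0) fun u => by
      simpa only [hα₁0, hγ₁0, add_zero] using heq 0 u
  have hprod : deriv α₁ 0 * deriv α₂ 0 = L * (deriv γ₁ 0 * deriv γ₂ 0) := by
    have hchain := deriv_mul_deriv_eq_of_forall_comp_eq (hα₁d 0) (hα₂d _) (hγ₁d 0) (hγ₂d _)
      fun t => by simpa only [mul_zero, zero_add] using heq t 0
    rw [hα₁0, hγ₁0] at hchain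
    linear_combination hchain
  refine ⟨hsum, hprod, fun s hs => ?_⟩
  linear_combination sq_sub_add_mul_add_mul_eq_zero_of_mem_pair hs + s * hsum - hprod

/-- Computation in the proof of Lemma 2 of the paper: from the functional
equation, `α₁'(0)` and `α₂'(0)` have sum `L·(γ₁'(0) + γ₂'(0))` and product
`L·γ₁'(0)·γ₂'(0)`, hence are the two roots of
`s² - L·G·s + L·γ₁'(0)·γ₂'(0) = 0` with `G = γ₁'(0) + γ₂'(0)`. -/
theorem stmt_8 (γ₁ γ₂ α₁ α₂ : ℝ → ℝ) (L : ℝ)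
    (hγ₁d : Differentiable ℝ γ₁) (hγ₁m : StrictMono γ₁) (hγ₁0 : γ₁ 0 = 0)
    (hγ₂d : Differentiable ℝ γ₂) (hγ₂m : StrictMono γ₂) (hγ₂0 : γ₂ 0 = 0)
    (hα₁d : Differentiable ℝ α₁) (hα₂d : Differentiable ℝ α₂)
    (hα₁0 : α₁ 0 = 0) (hα₂0 : α₂ 0 = 0)
    (heq : ∀ h u : ℝ,
      deriv α₁ h * u + α₂ (u + α₁ h) = L * (deriv γ₁ h * u + γ₂ (u + γ₁ h))) :
    deriv α₁ 0 + deriv α₂ 0 = L * (deriv γ₁ 0 + deriv γ₂ 0) ∧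
    deriv α₁ 0 * deriv α₂ 0 = L * (deriv γ₁ 0 * deriv γ₂ 0) ∧
    ∀ s ∈ ({deriv α₁ 0, deriv α₂ 0} : Set ℝ),
      s ^ 2 - L * (deriv γ₁ 0 + deriv γ₂ 0) * s
        + L * (deriv γ₁ 0) * (deriv γ₂ 0) = 0 :=
  stmt_8_general γ₁ γ₂ α₁ α₂ L hγ₁d hγ₁0 hγ₂d hα₁d hα₂d hα₁0 heq
end

section
/- Let K > 0, γ₀ > K, and 0 < d_m < 1 < d_M. If c₂ ∈ ℝ satisfies (K·d_M − γ₀)/(d_M − 1) ≤ c₂ ≤ (K·d_m − γ₀)/(d_m − 1) and c₁ = γ₀ − c₂, then for every d̃ ∈ [d_m, d_M] one has c₂ + c₁/d̃ ≥ K. -/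
/-! Clearing the denominators, `K ≤ c₂ + (γ₀ - c₂) / d` says that the affine function
`d ↦ (c₂ - K) * d + (γ₀ - c₂)` is nonnegative at `d`, and the two bounds on `c₂` say exactly
that it is nonnegative at `d_M` and at `d_m`. An affine function nonnegative at both ends of an
interval is nonnegative on all of it. -/

lemma affine_nonneg_of_mem_Icc {a b x y t : ℝ} (hx : 0 ≤ a * x + b) (hy : 0 ≤ a * y + b)
    (ht : t ∈ Set.Icc x y) : 0 ≤ a * t + b := by
  obtain ⟨hxt, hty⟩ := ht
  rcases le_total 0 a with ha | ha
  · nlinarith [mul_le_mul_of_nonneg_left hxt ha]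
  · nlinarith [mul_le_mul_of_nonpos_left hty ha]

lemma le_add_div_of_affine_nonneg {K γ₀ c₂ d : ℝ} (hd : 0 < d)
    (h : 0 ≤ (c₂ - K) * d + (γ₀ - c₂)) : K ≤ c₂ + (γ₀ - c₂) / d := by
  have hdiff : c₂ + (γ₀ - c₂) / d - K = ((c₂ - K) * d + (γ₀ - c₂)) / d := by
    field_simp
    ring
  linarith [div_nonneg h hd.le]

theorem stmt_13_general (K γ₀ dm dM c₁ c₂ : ℝ)
    (hdm : 0 < dm) (hdm1 : dm < 1) (hdM : 1 < dM)
    (hlo : (K * dM - γ₀) / (dM - 1) ≤ c₂) (hhi : c₂ ≤ (K * dm - γ₀) / (dm - 1))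
    (hc₁ : c₁ = γ₀ - c₂) :
    ∀ d ∈ Set.Icc dm dM, K ≤ c₂ + c₁ / d := by
  intro d hd
  have hlo' : K * dM - γ₀ ≤ c₂ * (dM - 1) := (div_le_iff₀ (by linarith)).mp hlo
  have hhi' : K * dm - γ₀ ≤ c₂ * (dm - 1) := (le_div_iff_of_neg (by linarith)).mp hhi
  have hnonneg : 0 ≤ (c₂ - K) * d + (γ₀ - c₂) :=
    affine_nonneg_of_mem_Icc (by linarith) (by linarith) hd
  rw [hc₁]
  exact le_add_div_of_affine_nonneg (hdm.trans_le hd.1) hnonneg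

/-- Core algebraic lemma in the proof of Theorem 3 of the paper: the constraints
`c₁ + c₂ = γ₀` and `(Kd_M - γ₀)/(d_M - 1) ≤ c₂ ≤ (Kd_m - γ₀)/(d_m - 1)`
guarantee that `c₂ + c₁/d̃ ≥ K` for every `d̃ ∈ [d_m, d_M]`. -/
theorem stmt_13 (K γ₀ dm dM c₁ c₂ : ℝ)
    (hK : 0 < K) (hγ₀ : K < γ₀) (hdm : 0 < dm) (hdm1 : dm < 1) (hdM : 1 < dM)
    (hlo : (K * dM - γ₀) / (dM - 1) ≤ c₂) (hhi : c₂ ≤ (K * dm - γ₀) / (dm - 1))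
    (hc₁ : c₁ = γ₀ - c₂) :
    ∀ d ∈ Set.Icc dm dM, K ≤ c₂ + c₁ / d :=
  stmt_13_general K γ₀ dm dM c₁ c₂ hdm hdm1 hdM hlo hhi hc₁
end

section
/- Let q, z, v, p₀ ∈ ℝ³ with q ≠ p₀, set d = ‖q − p₀‖ and β = (q − p₀)/d, and define g : ℝ → ℝ by g(t) = ⟨(q − p₀ − t·v)/‖q − p₀ − t·v‖, z⟩. Then the second derivative of g at t = 0 equals (1/d²)·( 2·⟨z, β⟩·‖v‖² − 3·⟨z, β⟩·(‖v‖² − ⟨β, v⟩²) − 2·⟨z, v⟩·⟨β, v⟩ ). -/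
open scoped RealInnerProductSpace

lemma key_scalar (A B C Dv E s0 : ℝ) (hs0 : 0 < s0) (hC : C = s0 ^ 2) :
    deriv (deriv (fun t : ℝ => (A - B * t) / Real.sqrt (C - 2 * Dv * t + E * t ^ 2))) 0
      = (-2 * B * Dv - A * E) / s0 ^ 3 + 3 * A * Dv ^ 2 / s0 ^ 5 := by
  have hCpos : 0 < C := hC ▸ pow_pos hs0 2
  set P : ℝ → ℝ := fun t => C - 2 * Dv * t + E * t ^ 2 with hPdef
  have hPcont : Continuous P := by fun_prop
  have hP0 : P 0 = C := by simp [hPdef]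
  have hUopen : IsOpen {t : ℝ | 0 < P t} := isOpen_lt continuous_const hPcont
  have hUmem : {t : ℝ | 0 < P t} ∈ nhds (0 : ℝ) :=
    hUopen.mem_nhds (by simpa [hP0] using hCpos)
  have hP' : ∀ t : ℝ, HasDerivAt P (2 * E * t - 2 * Dv) t := by
    intro t
    have h1 : HasDerivAt (fun t : ℝ => 2 * Dv * t) (2 * Dv) t := by
      simpa using (hasDerivAt_id t).const_mul (2 * Dv)
    have h2 : HasDerivAt (fun t : ℝ => E * t ^ 2) (E * (2 * t)) t := by
      simpa using (hasDerivAt_pow 2 t).const_mul E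
    have := ((hasDerivAt_const t C).fun_sub h1).fun_add h2
    refine this.congr_deriv ?_; ring
  have hlin : ∀ t : ℝ, HasDerivAt (fun t : ℝ => A - B * t) (-B) t := by
    intro t
    have h1 : HasDerivAt (fun t : ℝ => B * t) B t := by
      simpa using (hasDerivAt_id t).const_mul B
    simpa using (hasDerivAt_const t A).fun_sub h1
  have hsd : ∀ t : ℝ, 0 < P t →
      HasDerivAt (fun t => Real.sqrt (P t)) ((2 * E * t - 2 * Dv) / (2 * Real.sqrt (P t))) t := by
    intro t ht
    have := (Real.hasDerivAt_sqrt ht.ne').comp t (hP' t)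
    refine this.congr_deriv ?_
    field_simp
  have hder : ∀ t : ℝ, 0 < P t →
      HasDerivAt (fun t => (A - B * t) / Real.sqrt (P t))
        ((-B * P t + (A - B * t) * (Dv - E * t)) / Real.sqrt (P t) ^ 3) t := by
    intro t ht
    have hs : Real.sqrt (P t) ≠ 0 := (Real.sqrt_pos.mpr ht).ne'
    have hsq : Real.sqrt (P t) ^ 2 = P t := Real.sq_sqrt ht.le
    have := (hlin t).fun_div (hsd t ht) hs
    refine this.congr_deriv ?_
    rw [← hsq]
    set s := Real.sqrt (P t) with hsdef
    field_simp
    rw [Real.sq_sqrt (sq_nonneg s)]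
    ring
  -- first deriv eventually equals h2
  have hev : (deriv (fun t => (A - B * t) / Real.sqrt (P t))) =ᶠ[nhds (0:ℝ)]
      (fun t => (-B * P t + (A - B * t) * (Dv - E * t)) / Real.sqrt (P t) ^ 3) :=
    Filter.eventually_of_mem hUmem (fun t ht => (hder t ht).deriv)
  rw [hev.deriv_eq]
  -- now compute deriv of h2 at 0
  have hs0' : Real.sqrt (P 0) = s0 := by
    rw [hP0, hC, Real.sqrt_sq hs0.le]
  have hP0pos : 0 < P 0 := by simpa [hP0] using hCpos
  have hN : HasDerivAt (fun t => -B * P t + (A - B * t) * (Dv - E * t))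
      (-B * (2 * E * 0 - 2 * Dv) + ((-B) * (Dv - E * 0) + (A - B * 0) * (-E))) 0 := by
    have hlin2 : HasDerivAt (fun t : ℝ => Dv - E * t) (-E) 0 := by
      have h1 : HasDerivAt (fun t : ℝ => E * t) E 0 := by
        simpa using (hasDerivAt_id (0:ℝ)).const_mul E
      simpa using (hasDerivAt_const (0:ℝ) Dv).fun_sub h1
    exact (((hP' 0).const_mul (-B)).add ((hlin 0).mul hlin2))
  have hden : HasDerivAt (fun t => Real.sqrt (P t) ^ 3)
      (3 * Real.sqrt (P 0) ^ 2 * ((2 * E * 0 - 2 * Dv) / (2 * Real.sqrt (P 0)))) 0 := by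
    have := (hsd 0 hP0pos).fun_pow 3
    refine this.congr_deriv ?_
    norm_num
  have hs0ne : Real.sqrt (P 0) ^ 3 ≠ 0 := by
    rw [hs0']
    positivity
  have hfinal := (hN.fun_div hden hs0ne).deriv
  rw [hfinal]
  rw [hs0', hP0, hC]
  have : s0 ≠ 0 := hs0.ne'
  field_simp
  ring

/-- Hessian quadratic form of equation (10) of the paper, evaluated along the
straight-line motion `p(t) = p₀ + t·v`: the second derivative at `t = 0` of
`g(t) = ⟨(q - p₀ - t·v)/‖q - p₀ - t·v‖, z⟩` equals
`(1/d²)·(2⟨z,β⟩‖v‖² - 3⟨z,β⟩(‖v‖² - ⟨β,v⟩²) - 2⟨z,v⟩⟨β,v⟩)`. -/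
theorem stmt_18 (q z v p₀ : EuclideanSpace ℝ (Fin 3)) (hq : q ≠ p₀)
    (d : ℝ) (hd : d = ‖q - p₀‖)
    (β : EuclideanSpace ℝ (Fin 3)) (hβ : β = d⁻¹ • (q - p₀)) :
    deriv (deriv (fun t : ℝ => ⟪‖q - p₀ - t • v‖⁻¹ • (q - p₀ - t • v), z⟫)) 0 =
      (1 / d ^ 2) * (2 * ⟪z, β⟫ * ‖v‖ ^ 2
        - 3 * ⟪z, β⟫ * (‖v‖ ^ 2 - ⟪β, v⟫ ^ 2)
        - 2 * ⟪z, v⟫ * ⟪β, v⟫) := by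
  have hw : q - p₀ ≠ 0 := sub_ne_zero.mpr hq
  have hdpos : 0 < d := by rw [hd]; exact norm_pos_iff.mpr hw
  set A := ⟪q - p₀, z⟫ with hA
  set B := ⟪v, z⟫ with hB
  set Dv := ⟪q - p₀, v⟫ with hDv
  set E := ‖v‖ ^ 2 with hE
  set C := ‖q - p₀‖ ^ 2 with hCdef
  have hfun : (fun t : ℝ => ⟪‖q - p₀ - t • v‖⁻¹ • (q - p₀ - t • v), z⟫)
      = fun t : ℝ => (A - B * t) / Real.sqrt (C - 2 * Dv * t + E * t ^ 2) := by
    funext t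
    have hnorm : ‖q - p₀ - t • v‖ = Real.sqrt (C - 2 * Dv * t + E * t ^ 2) := by
      rw [← Real.sqrt_sq (norm_nonneg (q - p₀ - t • v))]
      congr 1
      rw [norm_sub_sq_real]
      rw [real_inner_smul_right, norm_smul]
      simp [hCdef, hDv, hE, Real.norm_eq_abs, mul_pow, sq_abs]
      ring
    rw [real_inner_smul_left, inner_sub_left, real_inner_smul_left, hnorm]
    rw [← hA]
    have : ⟪v, z⟫ = B := rfl
    rw [this]
    ring
  rw [hfun, key_scalar A B C Dv E d hdpos (by rw [hCdef, hd])]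
  have hzβ : ⟪z, β⟫ = d⁻¹ * A := by
    rw [hβ, real_inner_smul_right, hA, real_inner_comm]
  have hβv : ⟪β, v⟫ = d⁻¹ * Dv := by
    rw [hβ, real_inner_smul_left, hDv]
  have hzv : ⟪z, v⟫ = B := real_inner_comm v z
  rw [hzβ, hβv, hzv]
  have hd0 : d ≠ 0 := hdpos.ne'
  field_simp
  ring
end
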